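/- arXiv:2407.06995 — 4 statements merged into one kernel-verified Lean document; each statement's English description precedes it below -/
import Mathlib

section
/- Let D₁ = (d₁₁, d₁₂)ᵗ and D₂ = (d₂₁, d₂₂)ᵗ be vectors in ℝ². For every m ≥ 1, the determinant of the 2m × 2m matrix formed by concatenating the block columns I_m ⊗ D₁ and I_m ⊗ D₂ equals (-1)^⌊m/2⌋ · (det(D₁, D₂))^m, where det(D₁, D₂) = d₁₁ d₂₂ - d₁₂ d₂₁. -/
open Matrix

/-- The `2m × 2m` matrix `(I_m ⊗ D₁ | I_m ⊗ D₂)` obtained by horizontally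
concatenating the Kronecker products of the identity with the column vectors
`D₁, D₂ ∈ ℝ²`.  Row `r` corresponds to the block row `r / 2` and the inner
row `r % 2`; the first `m` columns come from `I_m ⊗ D₁`, the last `m` from
`I_m ⊗ D₂`. -/
def concatKron (m : ℕ) (D₁ D₂ : Fin 2 → ℝ) : Matrix (Fin (2 * m)) (Fin (2 * m)) ℝ :=
  Matrix.of fun r c =>
    if (c : ℕ) < m then
      (if (r : ℕ) / 2 = (c : ℕ) then D₁ ⟨(r : ℕ) % 2, by omega⟩ else 0)
    else
      (if (r : ℕ) / 2 = (c : ℕ) - m then D₂ ⟨(r : ℕ) % 2, by omega⟩ else 0)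

lemma concatKron_apply_val (m : ℕ) (D₁ D₂ : Fin 2 → ℝ) (r c : Fin (2 * m)) :
    concatKron m D₁ D₂ r c =
      if (c : ℕ) < m then
        (if (r : ℕ) / 2 = (c : ℕ) then
          (if (r : ℕ) % 2 = 0 then D₁ 0 else D₁ 1) else 0)
      else
        (if (r : ℕ) / 2 = (c : ℕ) - m then
          (if (r : ℕ) % 2 = 0 then D₂ 0 else D₂ 1) else 0) := by
  have e1 : ∀ pf : (r : ℕ) % 2 < 2,
      (⟨(r : ℕ) % 2, pf⟩ : Fin 2) = if (r : ℕ) % 2 = 0 then 0 else 1 := by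
    intro pf
    rcases Nat.mod_two_eq_zero_or_one (r : ℕ) with h | h <;> simp [h, Fin.ext_iff]
  show (if (c : ℕ) < m then _ else _) = _
  rw [e1]
  simp only [apply_ite D₁, apply_ite D₂]

lemma finRotate_inv_apply (k : ℕ) (a : Fin (k + 1)) :
    (finRotate (k + 1))⁻¹ a = a - 1 := by
  rw [Equiv.Perm.inv_eq_iff_eq, finRotate_succ_apply, sub_add_cancel]

lemma concatKron_step (m : ℕ) (hm : 1 ≤ m) (D₁ D₂ : Fin 2 → ℝ) :
    (concatKron (m + 1) D₁ D₂).det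
      = (-1 : ℝ) ^ m *
        ((D₁ 0 * D₂ 1 - D₁ 1 * D₂ 0) * (concatKron m D₁ D₂).det) := by
  set M := concatKron (m + 1) D₁ D₂ with hM
  set A : Matrix (Fin 2) (Fin 2) ℝ := !![D₁ 0, D₂ 0; D₁ 1, D₂ 1] with hA
  set D := concatKron m D₁ D₂ with hD
  have h2m : 2 + 2 * m = 2 * (m + 1) := by ring
  have hmm : m + m = 2 * m := by ring
  set u : Fin 2 ⊕ Fin (2 * m) ≃ Fin (2 * (m + 1)) :=
    finSumFinEquiv.trans (finCongr h2m) with hu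
  set u' : Fin m ⊕ Fin m ≃ Fin (2 * m) :=
    finSumFinEquiv.trans (finCongr hmm) with hu'
  set ρ : Equiv.Perm (Fin (2 * m)) :=
    u'.permCongr (Equiv.sumCongr (finRotate m)⁻¹ (Equiv.refl (Fin m))) with hρ
  set w : Fin (2 * m) := ⟨m - 1, by omega⟩ with hw
  have hwv : (w : ℕ) = m - 1 := rfl
  set χ : Equiv.Perm (Fin 2 ⊕ Fin (2 * m)) :=
    (Equiv.swap (Sum.inl 1) (Sum.inr w)) *
      (Equiv.sumCongr (Equiv.refl (Fin 2)) ρ) with hχ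
  -- values of u
  have hul : ∀ a : Fin 2, (u (Sum.inl a) : ℕ) = (a : ℕ) := by
    intro a; simp [hu]
  have hur : ∀ r : Fin (2 * m), (u (Sum.inr r) : ℕ) = 2 + (r : ℕ) := by
    intro r; simp [hu]; omega
  have hu'l : ∀ a : Fin m, (u' (Sum.inl a) : ℕ) = (a : ℕ) := by
    intro a; simp [hu']
  have hu'r : ∀ a : Fin m, (u' (Sum.inr a) : ℕ) = m + (a : ℕ) := by
    intro a; simp [hu']; omega
  -- values of ρ on the two halves
  have hρl : ∀ a : Fin m,
      ((ρ (u' (Sum.inl a))) : ℕ) = if (a : ℕ) = 0 then m - 1 else (a : ℕ) - 1 := by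
    intro a
    obtain ⟨k, rfl⟩ : ∃ k, m = k + 1 := ⟨m - 1, by omega⟩
    have h1 : ρ (u' (Sum.inl a)) = u' (Sum.inl ((finRotate (k + 1))⁻¹ a)) := by
      simp [hρ, Equiv.permCongr_apply]
    rw [h1, finRotate_inv_apply, hu'l, Fin.coe_sub_one]
    by_cases h : a = 0
    · simp [h]
    · have h' : (a : ℕ) ≠ 0 := fun hc => h (Fin.ext (by simp [hc]))
      rw [if_neg h, if_neg h']
  have hρr : ∀ a : Fin m, ρ (u' (Sum.inr a)) = u' (Sum.inr a) := by
    intro a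
    simp [hρ, Equiv.permCongr_apply]
  -- values of the column permutation
  have hχl0 : χ (Sum.inl (0 : Fin 2)) = Sum.inl 0 := by
    have e : (Equiv.sumCongr (Equiv.refl (Fin 2)) ρ) (Sum.inl 0) = Sum.inl 0 := by simp
    rw [hχ, Equiv.Perm.mul_apply, e]
    exact Equiv.swap_apply_of_ne_of_ne (by simp) (by simp)
  have hχl1 : χ (Sum.inl (1 : Fin 2)) = Sum.inr w := by
    have e : (Equiv.sumCongr (Equiv.refl (Fin 2)) ρ) (Sum.inl 1) = Sum.inl 1 := by simp
    rw [hχ, Equiv.Perm.mul_apply, e]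
    exact Equiv.swap_apply_left _ _
  have hχlval : ∀ b : Fin 2,
      ((u (χ (Sum.inl b))) : ℕ) = if (b : ℕ) = 0 then 0 else m + 1 := by
    intro b
    have hb2 := b.isLt
    by_cases hb : (b : ℕ) = 0
    · have hb' : b = 0 := Fin.ext (by simp [hb])
      rw [hb', hχl0, hul]
      simp
    · have hb' : b = 1 := Fin.ext (by simp; omega)
      rw [hb', hχl1, hur, hwv, if_neg (by simp)]
      omega
  have hχr : ∀ c : Fin (2 * m),
      ((u (χ (Sum.inr c))) : ℕ) = if (c : ℕ) < m then (c : ℕ) + 1 else (c : ℕ) + 2 := by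
    intro c
    obtain ⟨x, rfl⟩ := u'.surjective c
    have estep : ∀ z : Fin (2 * m),
        χ (Sum.inr z) = Equiv.swap (Sum.inl 1) (Sum.inr w) (Sum.inr (ρ z)) := by
      intro z; rw [hχ, Equiv.Perm.mul_apply]; simp
    rcases x with a | a
    · have ha := a.isLt
      by_cases h0 : (a : ℕ) = 0
      · have hww : ρ (u' (Sum.inl a)) = w := by
          apply Fin.ext
          rw [hρl, hwv, if_pos h0]
        rw [estep, hww, Equiv.swap_apply_right, hul, hu'l, if_pos (by omega)]
        simp [h0]
      · have hne : Sum.inr (ρ (u' (Sum.inl a))) ≠ (Sum.inl (1 : Fin 2) : Fin 2 ⊕ Fin (2 * m)) := by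
          simp
        have hne2 : Sum.inr (ρ (u' (Sum.inl a))) ≠ (Sum.inr w : Fin 2 ⊕ Fin (2 * m)) := by
          simp only [ne_eq, Sum.inr.injEq]
          intro hcon
          have hval := congrArg Fin.val hcon
          rw [hρl, hwv, if_neg h0] at hval
          omega
        rw [estep, Equiv.swap_apply_of_ne_of_ne hne hne2, hur, hρl, hu'l,
          if_neg h0, if_pos (by omega)]
        omega
    · have ha := a.isLt
      have hne : Sum.inr (ρ (u' (Sum.inr a))) ≠ (Sum.inl (1 : Fin 2) : Fin 2 ⊕ Fin (2 * m)) := by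
        simp
      have hne2 : Sum.inr (ρ (u' (Sum.inr a))) ≠ (Sum.inr w : Fin 2 ⊕ Fin (2 * m)) := by
        simp only [ne_eq, Sum.inr.injEq]
        intro hcon
        have hval := congrArg Fin.val hcon
        rw [hρr, hu'r, hwv] at hval
        omega
      rw [estep, Equiv.swap_apply_of_ne_of_ne hne hne2, hur, hρr, hu'r,
        if_neg (by omega)]
      omega
  -- entry values of A
  have hAval : ∀ a b : Fin 2, A a b =
      if (b : ℕ) = 0 then (if (a : ℕ) = 0 then D₁ 0 else D₁ 1)
      else (if (a : ℕ) = 0 then D₂ 0 else D₂ 1) := by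
    intro a b
    fin_cases a <;> fin_cases b <;> simp [hA]
  -- the key identification
  have key : M.submatrix u (u ∘ χ) = fromBlocks A 0 0 D := by
    ext x y
    rcases x with a | r <;> rcases y with b | c <;>
      simp only [Matrix.submatrix_apply, Function.comp_apply, fromBlocks_apply₁₁,
        fromBlocks_apply₁₂, fromBlocks_apply₂₁, fromBlocks_apply₂₂, Matrix.zero_apply]
    · have ha := a.isLt
      have hb := b.isLt
      rw [hM, concatKron_apply_val, hχlval, hul, hAval]
      split_ifs <;> first | rfl | omega
    · have ha := a.isLt
      have hc := c.isLt
      rw [hM, concatKron_apply_val, hχr, hul]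
      split_ifs <;> first | rfl | omega
    · have hr := r.isLt
      have hb := b.isLt
      rw [hM, concatKron_apply_val, hχlval, hur]
      split_ifs <;> first | rfl | omega
    · have hr := r.isLt
      have hc := c.isLt
      rw [hM, concatKron_apply_val, hχr, hur, hD, concatKron_apply_val]
      split_ifs <;> first | rfl | omega
  -- determinant bookkeeping
  have hsign : Equiv.Perm.sign χ = (-1 : ℤˣ) ^ m := by
    obtain ⟨k, rfl⟩ : ∃ k, m = k + 1 := ⟨m - 1, by omega⟩
    rw [hχ, _root_.map_mul, Equiv.Perm.sign_swap (by simp), Equiv.Perm.sign_sumCongr,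
      Equiv.Perm.sign_permCongr, Equiv.Perm.sign_sumCongr, Equiv.Perm.sign_refl,
      _root_.map_inv, sign_finRotate]
    simp [pow_succ]
  have h1 : (M.submatrix u (u ∘ χ)).det = ((Equiv.Perm.sign χ : ℤ) : ℝ) * M.det := by
    have e : M.submatrix u (u ∘ χ) = (M.submatrix u u).submatrix id χ := by
      rw [Matrix.submatrix_submatrix]
      rfl
    rw [e, Matrix.det_permute', Matrix.det_submatrix_equiv_self]
  have hdetA : A.det = D₁ 0 * D₂ 1 - D₁ 1 * D₂ 0 := by
    rw [hA, Matrix.det_fin_two_of]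
    ring
  rw [key, Matrix.det_fromBlocks_zero₂₁, hsign] at h1
  have hcast : (((-1 : ℤˣ) ^ m : ℤˣ) : ℤ) = (-1 : ℤ) ^ m := by
    push_cast; ring
  rw [hcast] at h1
  push_cast at h1
  have hsq : ((-1 : ℝ) ^ m) * ((-1 : ℝ) ^ m) = 1 := by
    rw [← pow_add, ← two_mul, pow_mul]; norm_num
  have hMdet : M.det = (-1 : ℝ) ^ m * (A.det * D.det) := by
    rw [h1, ← mul_assoc, hsq, one_mul]
  rw [hMdet, hdetA]

private lemma neg_one_pow_half_succ (m : ℕ) :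
    (-1 : ℝ) ^ ((m + 1) / 2) = (-1 : ℝ) ^ m * (-1 : ℝ) ^ (m / 2) := by
  rcases Nat.even_or_odd m with ⟨k, hk⟩ | ⟨k, hk⟩
  · subst hk
    rw [show (k + k + 1) / 2 = k by omega, show (k + k) / 2 = k by omega,
      show (-1 : ℝ) ^ (k + k) = 1 by rw [← two_mul]; simp [pow_mul], one_mul]
  · subst hk
    rw [show (2 * k + 1 + 1) / 2 = k + 1 by omega, show (2 * k + 1) / 2 = k by omega,
      pow_succ, pow_succ, pow_mul]
    simp

/-- For `m ≥ 1`, `det (I_m ⊗ D₁, I_m ⊗ D₂) = (-1)^⌊m/2⌋ (det (D₁, D₂))^m`,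
where `det (D₁, D₂) = d₁₁ d₂₂ - d₁₂ d₂₁`. -/
theorem det_concatKron (m : ℕ) (hm : 1 ≤ m) (D₁ D₂ : Fin 2 → ℝ) :
    (concatKron m D₁ D₂).det
      = (-1 : ℝ) ^ (m / 2) * (D₁ 0 * D₂ 1 - D₁ 1 * D₂ 0) ^ m := by
  induction m, hm using Nat.le_induction with
  | base =>
    have h1 : concatKron 1 D₁ D₂ = !![D₁ 0, D₂ 0; D₁ 1, D₂ 1] := by
      ext i j
      fin_cases i <;> fin_cases j <;> rfl
    rw [h1, Matrix.det_fin_two_of]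
    norm_num [mul_comm]
  | succ n hn ih =>
    rw [concatKron_step n hn D₁ D₂, ih, neg_one_pow_half_succ, pow_succ]
    ring
end

section
/- Let m, n ≥ 0 and let A ∈ M_{2^{m+1}, 2^m}(ℝ). Write A in 2×1 block column form with entries a_{ij} = (a_{ij}^{(1)}, a_{ij}^{(2)})ᵗ. Then (I_{2^m} ⊗ Xᵗ) A (I_{2^m} ⊗ X_nᵗ) = (I_{2^m} ⊗ X_{n+1}ᵗ)(I_{2^m} ⊗ L_nᵗ)(A ⊗ I_{n+1}), where X = (x, y)ᵗ, X_n is the degree-n monomial vector, and L_n is the (2n+2)×(n+2) matrix obtained by stacking L_{n,1} on top of L_{n,2}. -/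
/-!
The shift relations `x X_n = L_{n,1} X_{n+1}` and `y X_n = L_{n,2} X_{n+1}` say that the row
`X_{n+1}ᵗ L_nᵗ` is `Xᵗ ⊗ X_nᵗ`. By the mixed-product rule the right-hand side is therefore
`(I ⊗ (Xᵗ ⊗ X_nᵗ)) (A ⊗ I)`, and since `X_nᵗ` is a single row this agrees entrywise with
`(I ⊗ Xᵗ) A (I ⊗ X_nᵗ)`.
-/

open Matrix MvPolynomial
open scoped Kronecker

noncomputable section

abbrev P2 : Type := MvPolynomial (Fin 2) ℝ

/-- The row vector `Xᵗ = (x, y)`. -/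
def XrowOne : Matrix (Fin 1) (Fin 2) P2 := Matrix.of fun _ j => X j

/-- The row vector `X_nᵗ` of monomials of total degree `n`. -/
def Xrow (n : ℕ) : Matrix (Fin 1) (Fin (n + 1)) P2 :=
  Matrix.of fun _ k => X 0 ^ (n - (k : ℕ)) * X 1 ^ (k : ℕ)

/-- `L_n`, the `(2n+2) × (n+2)` matrix obtained by stacking `L_{n,1} = (I_{n+1}|0)`
on top of `L_{n,2} = (0|I_{n+1})`; rows are indexed by `Fin 2 × Fin (n+1)`. -/
def Lstack (n : ℕ) : Matrix (Fin 2 × Fin (n + 1)) (Fin (n + 2)) P2 :=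
  Matrix.of fun p j =>
    if p.1 = 0 then (if (p.2 : ℕ) = (j : ℕ) then 1 else 0)
    else (if (p.2 : ℕ) + 1 = (j : ℕ) then 1 else 0)

namespace Matrix

variable {R m ι κ : Type*} [CommSemiring R] [Fintype m] [DecidableEq m] [Fintype ι]
  [Fintype κ] [DecidableEq κ]

theorem one_kronecker_row_mul_mul_one_kronecker_row (u : Matrix (Fin 1) ι R)
    (v : Matrix (Fin 1) κ R) (w : Matrix (Fin 1) (ι × κ) R)
    (hw : ∀ a j k, w a (j, k) = u a j * v 0 k) (A : Matrix (m × ι) (m × Fin 1) R) :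
    ((1 : Matrix m m R) ⊗ₖ u) * A * ((1 : Matrix m m R) ⊗ₖ v)
      = (((1 : Matrix m m R) ⊗ₖ w)
          * (A ⊗ₖ (1 : Matrix κ κ R)).submatrix (Equiv.prodAssoc m ι κ).symm id).submatrix
          id (fun p : m × κ => ((p.1, 0), p.2)) := by
  ext ⟨i, a⟩ ⟨r, k⟩
  simp [mul_apply, Fintype.sum_prod_type, one_apply, hw, Finset.sum_mul, mul_assoc,
    mul_comm (v _ _)]

end Matrix

theorem Xrow_succ_mul_Lstack_transpose_apply (n : ℕ) (a : Fin 1) (j : Fin 2) (k : Fin (n + 1)) :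
    (Xrow (n + 1) * (Lstack n)ᵀ) a (j, k) = XrowOne a j * Xrow n 0 k := by
  have castSucc_iff (l : Fin (n + 2)) : (k : ℕ) = l ↔ k.castSucc = l := by simp [Fin.ext_iff]
  have succ_iff (l : Fin (n + 2)) : (k : ℕ) + 1 = l ↔ k.succ = l := by simp [Fin.ext_iff]
  fin_cases j
  · simp [mul_apply, Xrow, XrowOne, Lstack, castSucc_iff, Nat.sub_add_comm k.is_le]
    ring
  · simp [mul_apply, Xrow, XrowOne, Lstack, succ_iff]
    ring

/-- For `A ∈ M_{2^{m+1},2^m}(ℝ)` written in `2 × 1` block form (rows indexed by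
`Fin (2^m) × Fin 2`, columns by `Fin (2^m) × Fin 1`):
`(I_{2^m} ⊗ Xᵗ) A (I_{2^m} ⊗ X_nᵗ) = (I_{2^m} ⊗ X_{n+1}ᵗ)(I_{2^m} ⊗ L_nᵗ)(A ⊗ I_{n+1})`,
up to the canonical reindexings of the product index types. -/
theorem blockX_mul_A (m n : ℕ)
    (A : Matrix (Fin (2 ^ m) × Fin 2) (Fin (2 ^ m) × Fin 1) ℝ) :
    (((1 : Matrix (Fin (2 ^ m)) (Fin (2 ^ m)) P2) ⊗ₖ XrowOne)
        * (A.map (MvPolynomial.C)) : Matrix (Fin (2 ^ m) × Fin 1) (Fin (2 ^ m) × Fin 1) P2)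
        * ((1 : Matrix (Fin (2 ^ m)) (Fin (2 ^ m)) P2) ⊗ₖ Xrow n)
      = (((1 : Matrix (Fin (2 ^ m)) (Fin (2 ^ m)) P2) ⊗ₖ Xrow (n + 1))
          * ((1 : Matrix (Fin (2 ^ m)) (Fin (2 ^ m)) P2) ⊗ₖ (Lstack n)ᵀ)
          * (((A.map (MvPolynomial.C)) ⊗ₖ (1 : Matrix (Fin (n + 1)) (Fin (n + 1)) P2)).submatrix
              (Equiv.prodAssoc (Fin (2 ^ m)) (Fin 2) (Fin (n + 1))).symm id)).submatrix
          id (fun p : Fin (2 ^ m) × Fin (n + 1) => ((p.1, (0 : Fin 1)), p.2)) := by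
  rw [← mul_kronecker_mul, one_mul]
  exact one_kronecker_row_mul_mul_one_kronecker_row _ _ _
    (Xrow_succ_mul_Lstack_transpose_apply n) _

end
end

section
/- Let {p_n} be a sequence of polynomials in one variable orthogonal with respect to a weight ρ on (a,b), and suppose there are real numbers μ_{n,m-1} and a polynomial φ of degree at most 2 such that (ρ φ^m p_n^{(m)})' = -μ_{n,m-1} ρ φ^{m-1} p_n^{(m-1)} for all 1 ≤ m ≤ n, where p_n^{(m)} denotes the m-th derivative. If all μ_{n,j} ≠ 0 for 0 ≤ j ≤ n-1 and ρ(x) ≠ 0, then the Rodrigues formula p_n(x) = ((-1)^n p_n^{(n)} / (ρ(x) ∏_{j=0}^{n-1} μ_{n,j})) · (ρ φ^n)^{(n)}(x) holds, where p_n^{(n)} is the (constant) n-th derivative of p_n. -/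
open Polynomial MeasureTheory

private lemma iteratedDeriv_mul_const' (k : ℕ) (g : ℝ → ℝ) (c : ℝ) (x : ℝ) :
    iteratedDeriv k (fun t => g t * c) x = iteratedDeriv k g x * c := by
  induction k generalizing g x with
  | zero => simp
  | succ k ih =>
    rw [iteratedDeriv_succ', iteratedDeriv_succ']
    have h : deriv (fun t => g t * c) = fun y => deriv g y * c := by
      funext y; rw [deriv_mul_const_field]
    rw [h]
    exact ih (deriv g) x

/-- One-variable Rodrigues formula.  Let `p : ℕ → ℝ[X]` be a sequence of
polynomials with `deg (p k) = k`, orthogonal with respect to a weight `ρ` on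
`(a,b)`, let `φ` be a polynomial of degree at most `2`, `ρ` positive and
`n`-times continuously differentiable on `(a,b)`, and suppose that for all
`1 ≤ m ≤ n` and all `x ∈ (a,b)`
`(ρ φ^m p_n^{(m)})'(x) = -μ_{m-1} ρ(x) φ^{m-1}(x) p_n^{(m-1)}(x)`.
If all `μ_j ≠ 0` (`0 ≤ j ≤ n-1`), then for all `x ∈ (a,b)`
`p_n(x) = ((-1)^n p_n^{(n)} / (ρ(x) ∏_{j<n} μ_j)) · (ρ φ^n)^{(n)}(x)`. -/
theorem rodrigues_one_variable
    (a b : ℝ) (hab : a < b) (ρ : ℝ → ℝ) (p : ℕ → ℝ[X]) (φ : ℝ[X]) (n : ℕ)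
    (μ : ℕ → ℝ)
    (hdeg : ∀ k, (p k).natDegree = k)
    (hρpos : ∀ x ∈ Set.Ioo a b, 0 < ρ x)
    (hρsmooth : ContDiffOn ℝ n ρ (Set.Ioo a b))
    (horth : ∀ i j, i ≠ j →
      ∫ x in Set.Ioo a b, (p i).eval x * (p j).eval x * ρ x = 0)
    (hφ : φ.degree ≤ 2)
    (hrel : ∀ m, 1 ≤ m → m ≤ n → ∀ x ∈ Set.Ioo a b,
      deriv (fun t => ρ t * (φ ^ m * (Polynomial.derivative^[m] (p n))).eval t) x
        = -(μ (m - 1)) * ρ x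
            * (φ ^ (m - 1) * (Polynomial.derivative^[m - 1] (p n))).eval x)
    (hμ : ∀ j < n, μ j ≠ 0) :
    ∀ x ∈ Set.Ioo a b,
      (p n).eval x
        = ((-1 : ℝ) ^ n * (Polynomial.derivative^[n] (p n)).eval x
              / (ρ x * ∏ j ∈ Finset.range n, μ j))
          * iteratedDeriv n (fun t => ρ t * (φ ^ n).eval t) x := by
  intro x hx
  have hS : IsOpen (Set.Ioo a b) := isOpen_Ioo
  -- the iterated derivative identity
  have key : ∀ k ≤ n, ∀ y ∈ Set.Ioo a b,
      iteratedDeriv k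
        (fun t => ρ t * (φ ^ n * (Polynomial.derivative^[n] (p n))).eval t) y
      = (-1 : ℝ) ^ k * (∏ j ∈ Finset.Ico (n - k) n, μ j)
          * (ρ y * (φ ^ (n - k) * (Polynomial.derivative^[n - k] (p n))).eval y) := by
    intro k
    induction k with
    | zero => intro _ y hy; simp
    | succ k ih =>
      intro hk y hy
      have hk' : k ≤ n := by omega
      have heq : iteratedDeriv k
          (fun t => ρ t * (φ ^ n * (Polynomial.derivative^[n] (p n))).eval t)
          =ᶠ[nhds y] fun z => (-1 : ℝ) ^ k * (∏ j ∈ Finset.Ico (n - k) n, μ j)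
            * (ρ z * (φ ^ (n - k) * (Polynomial.derivative^[n - k] (p n))).eval z) := by
        filter_upwards [hS.mem_nhds hy] with z hz using ih hk' z hz
      rw [iteratedDeriv_succ, heq.deriv_eq, deriv_const_mul_field]
      have h1 : 1 ≤ n - k := by omega
      have hrel' := hrel (n - k) h1 (by omega) y hy
      rw [hrel']
      have hsub : n - k - 1 = n - (k + 1) := by omega
      have hprod : ∏ j ∈ Finset.Ico (n - (k + 1)) n, μ j
          = μ (n - (k + 1)) * ∏ j ∈ Finset.Ico (n - k) n, μ j := by
        rw [show n - k = n - (k + 1) + 1 from by omega,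
          Finset.prod_eq_prod_Ico_succ_bot (by omega : n - (k + 1) < n)]
      rw [hsub, hprod]
      ring
  have hkey := key n le_rfl x hx
  simp only [Nat.sub_self, pow_zero, one_mul, Function.iterate_zero, id_eq] at hkey
  rw [show Finset.Ico (0:ℕ) n = Finset.range n from by rw [Finset.range_eq_Ico]] at hkey
  -- the n-th iterated derivative of p n is a constant polynomial
  have hd0 : (Polynomial.derivative^[n] (p n)).natDegree = 0 := by
    have := Polynomial.natDegree_iterate_derivative (p n) n
    rw [hdeg n] at this
    omega
  obtain ⟨c, hc⟩ := Polynomial.natDegree_eq_zero.mp hd0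
  have hceval : ∀ t : ℝ, (Polynomial.derivative^[n] (p n)).eval t = c := by
    intro t; rw [← hc, Polynomial.eval_C]
  -- rewrite the function in `hkey` as (ρ · φ^n) * c
  have hfun : (fun t => ρ t * (φ ^ n * (Polynomial.derivative^[n] (p n))).eval t)
      = fun t => (ρ t * (φ ^ n).eval t) * c := by
    funext t
    rw [Polynomial.eval_mul, hceval t]
    ring
  rw [hfun, iteratedDeriv_mul_const'] at hkey
  set D := iteratedDeriv n (fun t => ρ t * (φ ^ n).eval t) x with hD
  set P := ∏ j ∈ Finset.range n, μ j with hP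
  have hρne : ρ x ≠ 0 := (hρpos x hx).ne'
  have hPne : P ≠ 0 := Finset.prod_ne_zero_iff.mpr fun j hj => hμ j (Finset.mem_range.mp hj)
  have hsq : ((-1 : ℝ) ^ n) * ((-1 : ℝ) ^ n) = 1 := by
    rw [← pow_add]
    exact Even.neg_one_pow ⟨n, rfl⟩
  rw [hceval x]
  -- hkey : D * c = (-1)^n * P * (ρ x * (p n).eval x)
  rw [div_mul_eq_mul_div, eq_div_iff (mul_ne_zero hρne hPne)]
  calc (p n).eval x * (ρ x * P)
      = ((-1 : ℝ) ^ n * (-1 : ℝ) ^ n) * P * (ρ x * (p n).eval x) := by rw [hsq]; ring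
    _ = (-1 : ℝ) ^ n * ((-1 : ℝ) ^ n * P * (ρ x * (p n).eval x)) := by ring
    _ = (-1 : ℝ) ^ n * (D * c) := by rw [hkey]
    _ = (-1 : ℝ) ^ n * c * D := by ring
end

section
/- If the symmetric 2×2 polynomial matrix Φ has all entries of total degree at most 1 (degree Φ < 2), then in the recursion ψ_i^{(m)} = I₂ ⊗ ψ_i^{(m-1)} + ∇(φ_{1i}, φ_{2i}) ⊗ I_{2^{m-1}} with ψ_i^{(0)}(x,y) = Xᵗ D_i + E_i, the linear-part coefficient matrices satisfy D_i^{(m)} = I_{2^m} ⊗ D_i for all m ≥ 0, where D_i^{(m)} is defined by ψ_i^{(m)}(x,y) = (I_{2^m} ⊗ Xᵗ) D_i^{(m)} + E_i^{(m)}. -/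
open Matrix MvPolynomial
open scoped Kronecker

noncomputable section

/-- `∇(φ_{1,c}, φ_{2,c})`, the `2 × 2` polynomial matrix whose columns are the
gradients of the entries of the `c`-th column of `Φ`. -/
def gradPairP (Φ : Matrix (Fin 2) (Fin 2) P2) (c : Fin 2) : Matrix (Fin 2) (Fin 2) P2 :=
  Matrix.of fun a b => pderiv a (Φ b c)

/-- The recursively defined matrix polynomials
`ψ^{(0)} = ψ₀`, `ψ^{(m)} = I₂ ⊗ ψ^{(m-1)} + ∇(φ_{1,c}, φ_{2,c}) ⊗ I_{2^{m-1}}`. -/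
def psiRec (Φ : Matrix (Fin 2) (Fin 2) P2) (ψ0 : P2) (c : Fin 2) :
    (m : ℕ) → Matrix (Fin (2 ^ m)) (Fin (2 ^ m)) P2
  | 0 => Matrix.of fun _ _ => ψ0
  | (m + 1) =>
      Matrix.reindex (finProdFinEquiv.trans (finCongr (by ring)))
        (finProdFinEquiv.trans (finCongr (by ring)))
        ((1 : Matrix (Fin 2) (Fin 2) P2) ⊗ₖ psiRec Φ ψ0 c m
          + gradPairP Φ c ⊗ₖ (1 : Matrix (Fin (2 ^ m)) (Fin (2 ^ m)) P2))

/-- The column vector `D ∈ ℝ²` as a `2 × 1` matrix. -/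
def colVec (D : Fin 2 → ℝ) : Matrix (Fin 2) (Fin 1) ℝ := Matrix.of fun i _ => D i

/- The partial derivatives of a polynomial of total degree at most one are constants, so the
gradient term added at every step of the recursion is a constant matrix. Hence, by induction,
`ψ^{(m)} = ψ₀ • I + (constant matrix)`, and the linear part `(D₀x + D₁y) • I` of `ψ₀ • I` is
exactly `(I ⊗ Xᵗ)(I ⊗ D)` read off on the diagonal blocks. -/

theorem MvPolynomial.pderiv_eq_C_of_totalDegree_le_one {σ R : Type*} [CommSemiring R]
    {p : MvPolynomial σ R} (hp : p.totalDegree ≤ 1) (i : σ) :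
    pderiv i p = C (coeff (Finsupp.single i 1) p) := by
  classical
  ext m
  rw [coeff_pderiv, coeff_C]
  split_ifs with hm
  · simp [← hm]
  · have hdeg : 1 < (m + Finsupp.single i 1).degree := by
      rw [map_add, Finsupp.degree_single, Nat.lt_add_left_iff_pos, Nat.pos_iff_ne_zero,
        Ne, Finsupp.degree_eq_zero_iff]
      exact Ne.symm hm
    rw [notMem_support_iff.mp fun h => (le_totalDegree h).trans hp |>.not_gt hdeg, zero_mul]

theorem Matrix.map_kronecker {l m n p α β F : Type*} [Mul α] [Mul β] [FunLike F α β]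
    [MulHomClass F α β] (f : F) (A : Matrix l m α) (B : Matrix n p α) :
    (A ⊗ₖ B).map f = A.map f ⊗ₖ B.map f := by
  ext; simp

theorem Matrix.submatrix_one_kronecker {n l α : Type*} [MulZeroOneClass α] [DecidableEq n]
    (B : Matrix l l α) (k k' : l) :
    ((1 : Matrix n n α) ⊗ₖ B).submatrix (fun i => (i, k)) (fun j => (j, k')) = B k k' • 1 := by
  ext i j
  by_cases h : i = j <;> simp [h]

theorem gradPairP_eq_map_C {Φ : Matrix (Fin 2) (Fin 2) P2} (hΦ : ∀ i j, (Φ i j).totalDegree ≤ 1)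
    (c : Fin 2) :
    gradPairP Φ c = (Matrix.of fun a b => coeff (Finsupp.single a 1) (Φ b c)).map C := by
  ext a b : 1
  exact pderiv_eq_C_of_totalDegree_le_one (hΦ b c) a

theorem psiRec_eq_smul_one_add_map_C {Φ : Matrix (Fin 2) (Fin 2) P2} {c : Fin 2}
    {G : Matrix (Fin 2) (Fin 2) ℝ} (hG : gradPairP Φ c = G.map C) (ψ0 : P2) (m : ℕ) :
    ∃ Em : Matrix (Fin (2 ^ m)) (Fin (2 ^ m)) ℝ, psiRec Φ ψ0 c m = ψ0 • 1 + Em.map C := by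
  induction m with
  | zero =>
    refine ⟨0, Matrix.ext fun i j => ?_⟩
    simp [psiRec, Fin.subsingleton_one.elim i j]
  | succ m ih =>
    obtain ⟨Em, hEm⟩ := ih
    let e : Fin 2 × Fin (2 ^ m) ≃ Fin (2 ^ (m + 1)) := finProdFinEquiv.trans (finCongr (by ring))
    refine ⟨reindex e e (1 ⊗ₖ Em + G ⊗ₖ 1), ?_⟩
    have hkron : (1 : Matrix (Fin 2) (Fin 2) P2) ⊗ₖ (ψ0 • 1 + Em.map C) + G.map C ⊗ₖ 1
        = ψ0 • 1 + (1 ⊗ₖ Em + G ⊗ₖ 1).map C := by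
      rw [kronecker_add, kronecker_smul, one_kronecker_one, Matrix.map_add _ (map_add C),
        Matrix.map_kronecker, Matrix.map_kronecker, Matrix.map_one _ (map_zero C) (map_one C),
        Matrix.map_one _ (map_zero C) (map_one C), add_assoc]
    rw [psiRec, hEm, hG, hkron, ← coe_reindexAlgEquiv P2 P2 e, map_add, map_smul, map_one,
      coe_reindexAlgEquiv, reindex_apply, reindex_apply, submatrix_map]

theorem XrowOne_mul_colVec (D : Fin 2 → ℝ) :
    XrowOne * (colVec D).map (C : ℝ → P2) = Matrix.of fun _ _ => C (D 0) * X 0 + C (D 1) * X 1 := by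
  ext i j : 2
  simp [XrowOne, colVec, mul_apply, Fin.sum_univ_two, mul_comm]

theorem submatrix_one_kronecker_XrowOne_mul_colVec (D : Fin 2 → ℝ) (n : ℕ) :
    (((1 : Matrix (Fin n) (Fin n) P2) ⊗ₖ XrowOne)
        * ((1 : Matrix (Fin n) (Fin n) ℝ) ⊗ₖ colVec D).map C).submatrix
        (fun i => (i, (0 : Fin 1))) (fun j => (j, (0 : Fin 1)))
      = (C (D 0) * X 0 + C (D 1) * X 1 : P2) • (1 : Matrix (Fin n) (Fin n) P2) := by
  rw [Matrix.map_kronecker, Matrix.map_one _ (map_zero C) (map_one C)]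
  -- the product above elaborates to `CStarMatrix` multiplication, only defeq to `Matrix.mul`
  erw [← mul_kronecker_mul]
  rw [one_mul, XrowOne_mul_colVec, submatrix_one_kronecker, of_apply]

/-- If all entries of `Φ` have total degree at most `1` (`degree Φ < 2`), then the
linear part of `ψ^{(m)}` is given by `D^{(m)} = I_{2^m} ⊗ D`, i.e.
`ψ^{(m)} = (I_{2^m} ⊗ Xᵗ)(I_{2^m} ⊗ D) + E^{(m)}` for some constant matrix
`E^{(m)}`. -/
theorem psiRec_linear_part
    (Φ : Matrix (Fin 2) (Fin 2) P2) (hΦ : ∀ i j, (Φ i j).totalDegree ≤ 1)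
    (D : Fin 2 → ℝ) (E : ℝ) (c : Fin 2) (m : ℕ) :
    ∃ Em : Matrix (Fin (2 ^ m)) (Fin (2 ^ m)) ℝ,
      psiRec Φ (MvPolynomial.C (D 0) * X 0 + MvPolynomial.C (D 1) * X 1
          + MvPolynomial.C E) c m
        = (((1 : Matrix (Fin (2 ^ m)) (Fin (2 ^ m)) P2) ⊗ₖ XrowOne)
            * ((1 : Matrix (Fin (2 ^ m)) (Fin (2 ^ m)) ℝ) ⊗ₖ colVec D).map
                MvPolynomial.C).submatrix (fun i => (i, (0 : Fin 1)))
            (fun j => (j, (0 : Fin 1)))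
          + Em.map MvPolynomial.C := by
  obtain ⟨Em, hEm⟩ := psiRec_eq_smul_one_add_map_C (gradPairP_eq_map_C hΦ c)
    (C (D 0) * X 0 + C (D 1) * X 1 + C E) m
  refine ⟨E • 1 + Em, ?_⟩
  rw [hEm, submatrix_one_kronecker_XrowOne_mul_colVec, add_smul, add_assoc,
    Matrix.map_add _ (map_add C)]
  simp only [smul_one_eq_diagonal, diagonal_map, C_0]

end
end
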